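/- Let n ≥ 1 and let P be an n×n real matrix with nonnegative entries whose every row sums to 1. Set ε = max_{j=1,…,n} min_{i=1,…,n} P_{ij}. Then for every vector y ∈ ℝ^n, max_i (Py)_i − min_i (Py)_i ≤ (1 − ε) (max_i y_i − min_i y_i); that is, a row-stochastic matrix contracts the spread of a vector by the factor (1 − ε). -/

import Mathlib

/-!
For two rows `p`, `q` of `P`, the common mass `g = min p q` contributes equally to
`(P y)_i` and `(P y)_k` and cancels in their difference. What is left on each side has
mass `1 - ∑ g`, weighted by values of `y` between `min y` and `max y`, so the difference
is at most `(1 - ∑ g) · spread y`; and `∑ g ≥ ε` because every column minimum lies below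
both entries of its column.
-/

open Finset Matrix

variable {ι κ : Type*} [Fintype ι] [Fintype κ]

noncomputable def spread (y : ι → ℝ) : ℝ := (⨆ i, y i) - (⨅ i, y i)

theorem spread_le {y : ι → ℝ} {c : ℝ} (hc : 0 ≤ c) (h : ∀ i k, y i - y k ≤ c) :
    spread y ≤ c := by
  rcases isEmpty_or_nonempty ι with hι | hι
  · simpa [spread, Real.iSup_of_isEmpty, Real.iInf_of_isEmpty] using hc
  · obtain ⟨i, hi⟩ := exists_eq_ciSup_of_finite (f := y)
    obtain ⟨k, hk⟩ := exists_eq_ciInf_of_finite (f := y)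
    simpa only [spread, ← hi, ← hk] using h i k

theorem spread_nonneg (y : ι → ℝ) : 0 ≤ spread y := by
  rcases isEmpty_or_nonempty ι with hι | ⟨⟨i⟩⟩
  · simp [spread, Real.iSup_of_isEmpty, Real.iInf_of_isEmpty]
  · exact sub_nonneg.2 ((ciInf_le (Finite.bddBelow_range y) i).trans
      (le_ciSup (Finite.bddAbove_range y) i))

theorem dotProduct_sub_dotProduct_le {p q y : κ → ℝ} {m M : ℝ} (hpq : ∑ j, p j = ∑ j, q j)
    (hm : ∀ j, m ≤ y j) (hM : ∀ j, y j ≤ M) :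
    p ⬝ᵥ y - q ⬝ᵥ y ≤ (∑ j, p j - ∑ j, min (p j) (q j)) * (M - m) := by
  set g := fun j => min (p j) (q j)
  have hupper : ∑ j, (p j - g j) * y j ≤ ∑ j, (p j - g j) * M :=
    sum_le_sum fun j _ => mul_le_mul_of_nonneg_left (hM j) (sub_nonneg.2 (min_le_left _ _))
  have hlower : ∑ j, (q j - g j) * m ≤ ∑ j, (q j - g j) * y j :=
    sum_le_sum fun j _ => mul_le_mul_of_nonneg_left (hm j) (sub_nonneg.2 (min_le_right _ _))
  calc p ⬝ᵥ y - q ⬝ᵥ y = ∑ j, (p j - g j) * y j - ∑ j, (q j - g j) * y j := by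
        simp only [dotProduct, ← sum_sub_distrib]
        exact sum_congr rfl fun j _ => by ring
    _ ≤ ∑ j, (p j - g j) * M - ∑ j, (q j - g j) * m := sub_le_sub hupper hlower
    _ = (∑ j, p j - ∑ j, g j) * (M - m) := by
        simp only [← sum_mul, sum_sub_distrib, hpq]
        ring

theorem Matrix.iSup_iInf_le_sum_min {P : Matrix ι κ ℝ} (hP : ∀ i j, 0 ≤ P i j) (i k : ι) :
    ⨆ j, ⨅ i', P i' j ≤ ∑ j, min (P i j) (P k j) := by
  have hmin_nonneg : ∀ j, 0 ≤ min (P i j) (P k j) := fun j => le_min (hP i j) (hP k j)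
  refine Real.iSup_le (fun j => ?_) (sum_nonneg fun j _ => hmin_nonneg j)
  calc ⨅ i', P i' j ≤ min (P i j) (P k j) :=
        le_min (ciInf_le (Finite.bddBelow_range _) i) (ciInf_le (Finite.bddBelow_range _) k)
    _ ≤ ∑ j, min (P i j) (P k j) :=
        single_le_sum (fun j _ => hmin_nonneg j) (mem_univ j)

theorem Matrix.spread_mulVec_le {P : Matrix ι κ ℝ} (hP_nonneg : ∀ i j, 0 ≤ P i j)
    (hP_row : ∀ i, ∑ j, P i j = 1) (y : κ → ℝ) :
    spread (P *ᵥ y) ≤ (1 - ⨆ j, ⨅ i, P i j) * spread y := by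
  have hε : ⨆ j, ⨅ i, P i j ≤ 1 := by
    rcases isEmpty_or_nonempty ι with hι | ⟨⟨i⟩⟩
    · simp [Real.iInf_of_isEmpty]
    · simpa [hP_row] using iSup_iInf_le_sum_min hP_nonneg i i
  refine spread_le (mul_nonneg (sub_nonneg.2 hε) (spread_nonneg y)) fun i k => ?_
  calc (P *ᵥ y) i - (P *ᵥ y) k
      ≤ (∑ j, P i j - ∑ j, min (P i j) (P k j)) * spread y :=
        dotProduct_sub_dotProduct_le (by simp only [hP_row])
          (fun j => ciInf_le (Finite.bddBelow_range y) j)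
          (fun j => le_ciSup (Finite.bddAbove_range y) j)
    _ ≤ (1 - ⨆ j, ⨅ i, P i j) * spread y := by
        rw [hP_row]
        gcongr
        · exact spread_nonneg y
        · exact iSup_iInf_le_sum_min hP_nonneg i k

theorem row_stochastic_spread_contraction_general
    (n : ℕ) (P : Matrix (Fin n) (Fin n) ℝ)
    (hP_nonneg : ∀ i j, 0 ≤ P i j)
    (hP_row : ∀ i, ∑ j, P i j = 1)
    (y : Fin n → ℝ) :
    (⨆ i, P.mulVec y i) - (⨅ i, P.mulVec y i) ≤
      (1 - ⨆ j, ⨅ i, P i j) * ((⨆ i, y i) - (⨅ i, y i)) :=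
  P.spread_mulVec_le hP_nonneg hP_row y

/-- A row-stochastic matrix contracts the spread of a vector by the factor
`1 − ε`, where `ε = max_j min_i P_{ij}`. -/
theorem row_stochastic_spread_contraction
    (n : ℕ) (hn : 1 ≤ n) (P : Matrix (Fin n) (Fin n) ℝ)
    (hP_nonneg : ∀ i j, 0 ≤ P i j)
    (hP_row : ∀ i, ∑ j, P i j = 1)
    (y : Fin n → ℝ) :
    (⨆ i, P.mulVec y i) - (⨅ i, P.mulVec y i) ≤
      (1 - ⨆ j, ⨅ i, P i j) * ((⨆ i, y i) - (⨅ i, y i)) :=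
  row_stochastic_spread_contraction_general n P hP_nonneg hP_row y
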